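/- Let F₂ := (S_B⊗id)(E) ∈ C⊗C, viewed in A⊗A. Then (y⊗1)·F₂ = F₂·(1⊗y) for all y ∈ C (so the map a⊗b ↦ (a⊗1)F₂(1⊗b) satisfies (a⊗1)F₂(1⊗yb) = (ay⊗1)F₂(1⊗b) and descends to the balanced quotient A⊗_tA := (A⊗A)/J_t), and for all a, b ∈ A the element (a⊗1)F₂(1⊗b) − a⊗b lies in J_t := span_ℂ{a'⊗yb' − a'y⊗b' : y ∈ C, a', b' ∈ A}. -/
import Mathlib


open scoped TensorProduct

set_option synthInstance.maxHeartbeats 1000000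
set_option maxHeartbeats 1000000

/-- The canonical inclusion `B ⊗ C → A ⊗ A` for subalgebras `B, C ⊆ A`. -/
noncomputable def incl {A : Type*} [Ring A] [Algebra ℂ A] (B C : Subalgebra ℂ A) :
    (↥B ⊗[ℂ] ↥C) →ₗ[ℂ] (A ⊗[ℂ] A) :=
  TensorProduct.map B.val.toLinearMap C.val.toLinearMap

/-- The linear map `μ_{S_B} : B ⊗ C → C`, `b ⊗ c ↦ S_B(b)·c`. -/
noncomputable def muSB {A : Type*} [Ring A] [Algebra ℂ A] {B C : Subalgebra ℂ A}
    (SB : ↥B ≃ₗ[ℂ] ↥C) : (↥B ⊗[ℂ] ↥C) →ₗ[ℂ] ↥C :=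
  TensorProduct.lift (LinearMap.mul ℂ ↥C) ∘ₗ TensorProduct.map SB.toLinearMap LinearMap.id

/-- The linear map `μ_{S_C} : B ⊗ C → B`, `b ⊗ c ↦ b·S_C(c)`. -/
noncomputable def muSC {A : Type*} [Ring A] [Algebra ℂ A] {B C : Subalgebra ℂ A}
    (SC : ↥C ≃ₗ[ℂ] ↥B) : (↥B ⊗[ℂ] ↥C) →ₗ[ℂ] ↥B :=
  TensorProduct.lift (LinearMap.mul ℂ ↥B) ∘ₗ TensorProduct.map LinearMap.id SC.toLinearMap

/-- `F₂ := (S_B⊗id)(E) ∈ C⊗C` viewed in `A⊗A`. -/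
noncomputable def F2 {A : Type*} [Ring A] [Algebra ℂ A] {B C : Subalgebra ℂ A}
    (SB : ↥B ≃ₗ[ℂ] ↥C) (E : ↥B ⊗[ℂ] ↥C) : A ⊗[ℂ] A :=
  incl C C (TensorProduct.map SB.toLinearMap LinearMap.id E)

/-- `(y⊗1)·F₂ = F₂·(1⊗y)` for all `y ∈ C`, and for all `a, b ∈ A` the element
`(a⊗1)F₂(1⊗b) − a⊗b` lies in the balancing subspace `J_t`. -/
theorem stmt13 {A : Type*} [Ring A] [Algebra ℂ A] (B C : Subalgebra ℂ A)
    (hcomm : ∀ (x : ↥B) (y : ↥C), (x : A) * (y : A) = (y : A) * (x : A))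
    (SB : ↥B ≃ₗ[ℂ] ↥C) (hSBmul : ∀ x x' : ↥B, SB (x * x') = SB x' * SB x)
    (hSBone : SB 1 = 1)
    (SC : ↥C ≃ₗ[ℂ] ↥B) (hSCmul : ∀ y y' : ↥C, SC (y * y') = SC y' * SC y)
    (hSCone : SC 1 = 1)
    (E : ↥B ⊗[ℂ] ↥C) (hEidem : E * E = E)
    (hE1 : ∀ x : ↥B, E * (x ⊗ₜ[ℂ] (1 : ↥C)) = E * ((1 : ↥B) ⊗ₜ[ℂ] SB x))
    (hE2 : ∀ y : ↥C, ((1 : ↥B) ⊗ₜ[ℂ] y) * E = (SC y ⊗ₜ[ℂ] (1 : ↥C)) * E)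
    (hn1 : muSB SB E = 1) (hn2 : muSC SC E = 1) :
    (∀ y : ↥C,
      ((y : A) ⊗ₜ[ℂ] (1 : A)) * F2 SB E = F2 SB E * ((1 : A) ⊗ₜ[ℂ] (y : A))) ∧
    (∀ a b : A,
      (a ⊗ₜ[ℂ] (1 : A)) * F2 SB E * ((1 : A) ⊗ₜ[ℂ] b) - a ⊗ₜ[ℂ] b ∈
        Submodule.span ℂ {z : A ⊗[ℂ] A |
          ∃ (y : ↥C) (a' b' : A),
            z = a' ⊗ₜ[ℂ] ((y : A) * b') - (a' * (y : A)) ⊗ₜ[ℂ] b'}) := by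
  classical
  have h1 : ∀ (x : ↥B) (t : ↥B ⊗[ℂ] ↥C),
      incl C C (TensorProduct.map SB.toLinearMap LinearMap.id (t * (x ⊗ₜ[ℂ] (1:↥C)))) =
      (((SB x : A)) ⊗ₜ[ℂ] (1:A)) * incl C C (TensorProduct.map SB.toLinearMap LinearMap.id t) := by
    intro x t
    induction t using TensorProduct.induction_on with
    | zero => simp
    | tmul b c =>
        simp [incl, Algebra.TensorProduct.tmul_mul_tmul, hSBmul]
    | add u v hu hv => simp [add_mul, mul_add, hu, hv]
  have h2 : ∀ (x : ↥B) (t : ↥B ⊗[ℂ] ↥C),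
      incl C C (TensorProduct.map SB.toLinearMap LinearMap.id (t * ((1:↥B) ⊗ₜ[ℂ] SB x))) =
      incl C C (TensorProduct.map SB.toLinearMap LinearMap.id t) * ((1:A) ⊗ₜ[ℂ] ((SB x : A))) := by
    intro x t
    induction t using TensorProduct.induction_on with
    | zero => simp
    | tmul b c =>
        simp [incl, Algebra.TensorProduct.tmul_mul_tmul]
    | add u v hu hv => simp [add_mul, mul_add, hu, hv]
  constructor
  · intro y
    have hy : SB (SB.symm y) = y := SB.apply_symm_apply y
    have key := hE1 (SB.symm y)
    have := congrArg (fun t => incl C C (TensorProduct.map SB.toLinearMap LinearMap.id t)) key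
    rw [h1, h2] at this
    rw [hy] at this
    simpa [F2] using this
  · intro a b
    have key2 : ∀ t : ↥B ⊗[ℂ] ↥C,
        (a ⊗ₜ[ℂ] (1:A)) * incl C C (TensorProduct.map SB.toLinearMap LinearMap.id t) *
          ((1:A) ⊗ₜ[ℂ] b) - (a * ((muSB SB t : ↥C) : A)) ⊗ₜ[ℂ] b ∈
        Submodule.span ℂ {z : A ⊗[ℂ] A |
          ∃ (y : ↥C) (a' b' : A),
            z = a' ⊗ₜ[ℂ] ((y : A) * b') - (a' * (y : A)) ⊗ₜ[ℂ] b'} := by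
      intro t
      induction t using TensorProduct.induction_on with
      | zero => simp
      | tmul b' c =>
          apply Submodule.subset_span
          refine ⟨c, a * ((SB b' : A)), b, ?_⟩
          simp [incl, muSB, Algebra.TensorProduct.tmul_mul_tmul, mul_assoc]
      | add u v hu hv =>
          have := Submodule.add_mem _ hu hv
          have hrw : (a ⊗ₜ[ℂ] (1:A)) * incl C C (TensorProduct.map SB.toLinearMap LinearMap.id (u + v)) *
              ((1:A) ⊗ₜ[ℂ] b) - (a * ((muSB SB (u + v) : ↥C) : A)) ⊗ₜ[ℂ] b =
              ((a ⊗ₜ[ℂ] (1:A)) * incl C C (TensorProduct.map SB.toLinearMap LinearMap.id u) *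
              ((1:A) ⊗ₜ[ℂ] b) - (a * ((muSB SB u : ↥C) : A)) ⊗ₜ[ℂ] b) +
              ((a ⊗ₜ[ℂ] (1:A)) * incl C C (TensorProduct.map SB.toLinearMap LinearMap.id v) *
              ((1:A) ⊗ₜ[ℂ] b) - (a * ((muSB SB v : ↥C) : A)) ⊗ₜ[ℂ] b) := by
            simp only [map_add, Subalgebra.coe_add, mul_add, add_mul, TensorProduct.add_tmul]
            abel
          rw [hrw]
          exact this
    have := key2 E
    rw [hn1] at this
    simpa [F2] using this
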